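/- arXiv:1310.8493 — 4 statements merged into one kernel-verified Lean document; each statement's English description precedes it below -/
import Mathlib

section
/- For all real x with 0 ≤ x < 1 and every positive integer μ, the Taylor polynomial T_μ(x) = Σ_{ℓ=0}^{μ-1} binom(2ℓ,ℓ) (x/2)^{2ℓ} satisfies 0 ≤ 1 - sqrt(1 - x²) T_μ(x) ≤ x^{2μ}. -/
/-!
With `y = x²` and `c k = C(2k,k) / 4^k`, the sum is `T = ∑_{k<μ} c k y^k`, a truncation of the
series of `(1 - y)^(-1/2)`. The convolution identity `∑_{i+j=n} c i c j = 1` (the squared series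
is `1/(1-y)`) shows that the coefficients of `T²` lie in `[0, 1]` and equal `1` below degree `μ`,
so `∑_{n<μ} y^n ≤ T² ≤ ∑_{n<2μ} y^n`. Multiplying by `1 - y` gives
`1 - y^μ ≤ u² ≤ 1` for `u = √(1 - y) T ≥ 0`, whence `0 ≤ 1 - u ≤ 1 - u² ≤ y^μ`.
-/

open Finset

noncomputable def invSqrtCoeff (k : ℕ) : ℝ := (k.centralBinom : ℝ) / 4 ^ k

lemma invSqrtCoeff_nonneg (k : ℕ) : 0 ≤ invSqrtCoeff k := by
  unfold invSqrtCoeff; positivity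

lemma two_mul_succ_mul_invSqrtCoeff_succ (k : ℕ) :
    2 * ((k : ℝ) + 1) * invSqrtCoeff (k + 1) = (2 * k + 1) * invSqrtCoeff k := by
  have h : ((k : ℝ) + 1) * (k + 1).centralBinom = 2 * (2 * k + 1) * k.centralBinom := by
    exact_mod_cast Nat.succ_mul_centralBinom_succ k
  unfold invSqrtCoeff
  rw [pow_succ]
  field_simp
  linear_combination 2 * h

lemma two_mul_sum_antidiagonal_fst_mul {R : Type*} [CommSemiring R] (a : ℕ → R) (n : ℕ) :
    2 * ∑ p ∈ antidiagonal n, (p.1 : R) * (a p.1 * a p.2) =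
      n * ∑ p ∈ antidiagonal n, a p.1 * a p.2 := by
  have hswap : ∑ p ∈ antidiagonal n, (p.1 : R) * (a p.1 * a p.2) =
      ∑ p ∈ antidiagonal n, (p.2 : R) * (a p.1 * a p.2) := by
    rw [← Nat.sum_antidiagonal_swap]
    exact sum_congr rfl fun p _ => by simp only [Prod.fst_swap, Prod.snd_swap]; ring
  rw [two_mul]
  nth_rw 2 [hswap]
  rw [← sum_add_distrib, mul_sum]
  refine sum_congr rfl fun p hp => ?_
  rw [← add_mul, ← Nat.cast_add, mem_antidiagonal.mp hp]

-- Writing `S n` for the left side, summing `2 p.1 c p.1 c p.2` over the antidiagonal `n + 1` in two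
-- ways (by symmetry, and by the recurrence of `c` after shifting to the antidiagonal `n`) gives
-- `(n + 1) S (n + 1) = (n + 1) S n`.
lemma sum_antidiagonal_invSqrtCoeff_mul (n : ℕ) :
    ∑ p ∈ antidiagonal n, invSqrtCoeff p.1 * invSqrtCoeff p.2 = 1 := by
  induction n with
  | zero => simp [invSqrtCoeff]
  | succ n ih =>
    set c := invSqrtCoeff
    have hshift : 2 * ∑ p ∈ antidiagonal (n + 1), (p.1 : ℝ) * (c p.1 * c p.2) =
        ∑ p ∈ antidiagonal n, (2 * (p.1 : ℝ) + 1) * (c p.1 * c p.2) := by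
      rw [Nat.sum_antidiagonal_succ]
      simp only [CharP.cast_eq_zero, zero_mul, zero_add]
      rw [mul_sum]
      refine sum_congr rfl fun p _ => ?_
      push_cast
      linear_combination c p.2 * two_mul_succ_mul_invSqrtCoeff_succ p.1
    have hsplit : ∑ p ∈ antidiagonal n, (2 * (p.1 : ℝ) + 1) * (c p.1 * c p.2) =
        2 * ∑ p ∈ antidiagonal n, (p.1 : ℝ) * (c p.1 * c p.2) +
          ∑ p ∈ antidiagonal n, c p.1 * c p.2 := by
      rw [mul_sum, ← sum_add_distrib]
      exact sum_congr rfl fun p _ => by ring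
    have key := two_mul_sum_antidiagonal_fst_mul c (n + 1)
    rw [hshift, hsplit, two_mul_sum_antidiagonal_fst_mul, ih] at key
    push_cast at key
    have hn : (n : ℝ) + 1 ≠ 0 := by positivity
    exact mul_left_cancel₀ hn (by linear_combination -key)

section ConvolutionSquareRoot

variable {a : ℕ → ℝ} {y : ℝ}

lemma geom_sum_eq_sum_sum_mul_pow (hconv : ∀ n, ∑ p ∈ antidiagonal n, a p.1 * a p.2 = 1)
    (N : ℕ) :
    ∑ n ∈ range N, y ^ n =
      ∑ i ∈ range N, ∑ j ∈ range (N - i), a i * y ^ i * (a j * y ^ j) := by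
  rw [← sum_range_diag_flip]
  refine sum_congr rfl fun n _ => ?_
  rw [← one_mul (y ^ n), ← hconv n, Nat.sum_antidiagonal_eq_sum_range_succ (fun i j => a i * a j),
    sum_mul]
  refine sum_congr rfl fun i hi => ?_
  rw [← pow_mul_pow_sub y (Nat.lt_succ_iff.mp (mem_range.mp hi))]
  ring

lemma geom_sum_le_sq_sum (ha : ∀ k, 0 ≤ a k)
    (hconv : ∀ n, ∑ p ∈ antidiagonal n, a p.1 * a p.2 = 1) (hy : 0 ≤ y) (μ : ℕ) :
    ∑ n ∈ range μ, y ^ n ≤ (∑ k ∈ range μ, a k * y ^ k) ^ 2 := by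
  have hterm : ∀ k, 0 ≤ a k * y ^ k := fun k => mul_nonneg (ha k) (pow_nonneg hy k)
  rw [geom_sum_eq_sum_sum_mul_pow hconv, sq, sum_mul_sum]
  refine sum_le_sum fun i _ => sum_le_sum_of_subset_of_nonneg
    (range_subset_range.mpr (Nat.sub_le μ i)) fun j _ _ => mul_nonneg (hterm i) (hterm j)

lemma sq_sum_le_geom_sum (ha : ∀ k, 0 ≤ a k)
    (hconv : ∀ n, ∑ p ∈ antidiagonal n, a p.1 * a p.2 = 1) (hy : 0 ≤ y) (μ : ℕ) :
    (∑ k ∈ range μ, a k * y ^ k) ^ 2 ≤ ∑ n ∈ range (2 * μ), y ^ n := by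
  have hterm : ∀ k, 0 ≤ a k * y ^ k := fun k => mul_nonneg (ha k) (pow_nonneg hy k)
  rw [geom_sum_eq_sum_sum_mul_pow hconv, sq, sum_mul_sum]
  calc ∑ i ∈ range μ, ∑ j ∈ range μ, a i * y ^ i * (a j * y ^ j)
      ≤ ∑ i ∈ range μ, ∑ j ∈ range (2 * μ - i), a i * y ^ i * (a j * y ^ j) :=
        sum_le_sum fun i hi => sum_le_sum_of_subset_of_nonneg
          (range_subset_range.mpr (by have := mem_range.mp hi; omega))
          fun j _ _ => mul_nonneg (hterm i) (hterm j)
    _ ≤ ∑ i ∈ range (2 * μ), ∑ j ∈ range (2 * μ - i), a i * y ^ i * (a j * y ^ j) :=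
        sum_le_sum_of_subset_of_nonneg (range_subset_range.mpr (by omega))
          fun i _ _ => sum_nonneg fun j _ => mul_nonneg (hterm i) (hterm j)

lemma one_sub_pow_le_one_sub_mul_sq_sum (ha : ∀ k, 0 ≤ a k)
    (hconv : ∀ n, ∑ p ∈ antidiagonal n, a p.1 * a p.2 = 1) (hy0 : 0 ≤ y) (hy1 : y ≤ 1) (μ : ℕ) :
    1 - y ^ μ ≤ (1 - y) * (∑ k ∈ range μ, a k * y ^ k) ^ 2 := by
  rw [← mul_neg_geom_sum]
  exact mul_le_mul_of_nonneg_left (geom_sum_le_sq_sum ha hconv hy0 μ) (sub_nonneg.mpr hy1)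

lemma one_sub_mul_sq_sum_le_one (ha : ∀ k, 0 ≤ a k)
    (hconv : ∀ n, ∑ p ∈ antidiagonal n, a p.1 * a p.2 = 1) (hy0 : 0 ≤ y) (hy1 : y ≤ 1) (μ : ℕ) :
    (1 - y) * (∑ k ∈ range μ, a k * y ^ k) ^ 2 ≤ 1 :=
  calc (1 - y) * (∑ k ∈ range μ, a k * y ^ k) ^ 2
      ≤ (1 - y) * ∑ n ∈ range (2 * μ), y ^ n :=
        mul_le_mul_of_nonneg_left (sq_sum_le_geom_sum ha hconv hy0 μ) (sub_nonneg.mpr hy1)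
    _ = 1 - y ^ (2 * μ) := mul_neg_geom_sum y _
    _ ≤ 1 := sub_le_self _ (pow_nonneg hy0 _)

end ConvolutionSquareRoot

lemma one_sub_bounds_of_sq_bounds {u v : ℝ} (hu : 0 ≤ u) (hlow : 1 - v ≤ u ^ 2)
    (hupp : u ^ 2 ≤ 1) :
    0 ≤ 1 - u ∧ 1 - u ≤ v := by
  have hu1 : u ≤ 1 := (sq_le_one_iff₀ hu).mp hupp
  have hsq : u ^ 2 ≤ u := by nlinarith
  constructor <;> linarith

lemma choose_two_mul_mul_div_two_pow (x : ℝ) (ℓ : ℕ) :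
    ((2 * ℓ).choose ℓ : ℝ) * (x / 2) ^ (2 * ℓ) = invSqrtCoeff ℓ * (x ^ 2) ^ ℓ := by
  rw [invSqrtCoeff, ← Nat.centralBinom_eq_two_mul_choose, pow_mul, div_pow, div_pow]
  norm_num
  ring

theorem stmt_8_general (x : ℝ) (hx0 : 0 ≤ x) (hx1 : x < 1) (μ : ℕ) :
    0 ≤ 1 - Real.sqrt (1 - x ^ 2) *
        ∑ ℓ ∈ Finset.range μ, (Nat.choose (2 * ℓ) ℓ : ℝ) * (x / 2) ^ (2 * ℓ) ∧
      1 - Real.sqrt (1 - x ^ 2) *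
          ∑ ℓ ∈ Finset.range μ, (Nat.choose (2 * ℓ) ℓ : ℝ) * (x / 2) ^ (2 * ℓ) ≤
        x ^ (2 * μ) := by
  simp only [choose_two_mul_mul_div_two_pow]
  rw [pow_mul x 2 μ]
  have hy0 : 0 ≤ x ^ 2 := sq_nonneg x
  have hy1 : x ^ 2 ≤ 1 := (sq_le_one_iff₀ hx0).mpr hx1.le
  set T := ∑ ℓ ∈ range μ, invSqrtCoeff ℓ * (x ^ 2) ^ ℓ
  have hT : 0 ≤ T := sum_nonneg fun ℓ _ => mul_nonneg (invSqrtCoeff_nonneg ℓ) (pow_nonneg hy0 ℓ)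
  have hsq : (Real.sqrt (1 - x ^ 2) * T) ^ 2 = (1 - x ^ 2) * T ^ 2 := by
    rw [mul_pow, Real.sq_sqrt (sub_nonneg.mpr hy1)]
  refine one_sub_bounds_of_sq_bounds (mul_nonneg (Real.sqrt_nonneg _) hT) ?_ ?_ <;> rw [hsq]
  · exact one_sub_pow_le_one_sub_mul_sq_sum invSqrtCoeff_nonneg
      sum_antidiagonal_invSqrtCoeff_mul hy0 hy1 μ
  · exact one_sub_mul_sq_sum_le_one invSqrtCoeff_nonneg
      sum_antidiagonal_invSqrtCoeff_mul hy0 hy1 μ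

theorem stmt_8 (x : ℝ) (hx0 : 0 ≤ x) (hx1 : x < 1) (μ : ℕ) (hμ : 1 ≤ μ) :
    0 ≤ 1 - Real.sqrt (1 - x ^ 2) *
        ∑ ℓ ∈ Finset.range μ, (Nat.choose (2 * ℓ) ℓ : ℝ) * (x / 2) ^ (2 * ℓ) ∧
      1 - Real.sqrt (1 - x ^ 2) *
          ∑ ℓ ∈ Finset.range μ, (Nat.choose (2 * ℓ) ℓ : ℝ) * (x / 2) ^ (2 * ℓ) ≤
        x ^ (2 * μ) :=
  stmt_8_general x hx0 hx1 μ
end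

section
/- For all nonnegative integers m and all integers k with 0 ≤ k ≤ m, the double factorial ratio satisfies (3/5)^k sqrt(m!/(m-k)!) ≤ m!!/(m-k)!! ≤ 2^k sqrt(m!/(m-k)!). -/
open Nat

private lemma hsqrt (x y c d : ℝ) (hx : 0 ≤ x) (hy : 0 ≤ y) (hc : 0 ≤ c) (hd : 0 ≤ d)
    (h : x * c ^ 2 ≤ y * d ^ 2) : Real.sqrt x * c ≤ Real.sqrt y * d := by
  have h1 : Real.sqrt (x * c ^ 2) ≤ Real.sqrt (y * d ^ 2) := Real.sqrt_le_sqrt h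
  rwa [Real.sqrt_mul hx, Real.sqrt_mul hy, Real.sqrt_sq hc, Real.sqrt_sq hd] at h1

private lemma df_nonneg (n : ℕ) : (0 : ℝ) ≤ (n‼ : ℝ) := by positivity

private lemma df_pos (n : ℕ) : (0 : ℝ) < (n‼ : ℝ) := by
  exact_mod_cast Nat.doubleFactorial_pos n

private lemma odd_upper (j : ℕ) :
    ((2 * j + 1)‼ : ℝ) ≤ Real.sqrt (2 * (j : ℝ) + 1) * ((2 * j)‼ : ℝ) := by
  induction j with
  | zero => simp
  | succ j ih =>
    have e1 : 2 * (j + 1) + 1 = (2 * j + 1) + 2 := by ring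
    have e2 : 2 * (j + 1) = (2 * j) + 2 := by ring
    rw [e1, e2, Nat.doubleFactorial_add_two, Nat.doubleFactorial_add_two]
    push_cast
    have key : Real.sqrt (2 * (j : ℝ) + 1) * (2 * (j : ℝ) + 1 + 2) ≤
        Real.sqrt (2 * ((j : ℝ) + 1) + 1) * (2 * (j : ℝ) + 2) := by
      apply hsqrt <;> try positivity
      nlinarith [sq_nonneg ((j : ℝ))]
    calc (2 * (j : ℝ) + 1 + 2) * ((2 * j + 1)‼ : ℝ)
        ≤ (2 * (j : ℝ) + 1 + 2) * (Real.sqrt (2 * (j : ℝ) + 1) * ((2 * j)‼ : ℝ)) := by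
          apply mul_le_mul_of_nonneg_left ih (by positivity)
      _ = (Real.sqrt (2 * (j : ℝ) + 1) * (2 * (j : ℝ) + 1 + 2)) * ((2 * j)‼ : ℝ) := by ring
      _ ≤ (Real.sqrt (2 * ((j : ℝ) + 1) + 1) * (2 * (j : ℝ) + 2)) * ((2 * j)‼ : ℝ) := by
          apply mul_le_mul_of_nonneg_right key (df_nonneg _)
      _ = Real.sqrt (2 * ((j : ℝ) + 1) + 1) * ((2 * (j : ℝ) + 2) * ((2 * j)‼ : ℝ)) := by ring

private lemma odd_lower (j : ℕ) :
    Real.sqrt ((j : ℝ) + 1) * ((2 * j)‼ : ℝ) ≤ ((2 * j + 1)‼ : ℝ) := by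
  induction j with
  | zero => simp
  | succ j ih =>
    have e1 : 2 * (j + 1) + 1 = (2 * j + 1) + 2 := by ring
    have e2 : 2 * (j + 1) = (2 * j) + 2 := by ring
    rw [e1, e2, Nat.doubleFactorial_add_two, Nat.doubleFactorial_add_two]
    push_cast
    have key : Real.sqrt ((j : ℝ) + 1 + 1) * (2 * (j : ℝ) + 2) ≤
        Real.sqrt ((j : ℝ) + 1) * (2 * (j : ℝ) + 1 + 2) := by
      apply hsqrt <;> try positivity
      nlinarith [sq_nonneg ((j : ℝ))]
    calc Real.sqrt ((j : ℝ) + 1 + 1) * ((2 * (j : ℝ) + 2) * ((2 * j)‼ : ℝ))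
        = (Real.sqrt ((j : ℝ) + 1 + 1) * (2 * (j : ℝ) + 2)) * ((2 * j)‼ : ℝ) := by ring
      _ ≤ (Real.sqrt ((j : ℝ) + 1) * (2 * (j : ℝ) + 1 + 2)) * ((2 * j)‼ : ℝ) := by
          apply mul_le_mul_of_nonneg_right key (df_nonneg _)
      _ = (2 * (j : ℝ) + 1 + 2) * (Real.sqrt ((j : ℝ) + 1) * ((2 * j)‼ : ℝ)) := by ring
      _ ≤ (2 * (j : ℝ) + 1 + 2) * ((2 * j + 1)‼ : ℝ) := by
          apply mul_le_mul_of_nonneg_left ih (by positivity)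

private lemma even_upper (j : ℕ) :
    ((2 * j + 2)‼ : ℝ) ≤ Real.sqrt 2 * Real.sqrt (2 * (j : ℝ) + 2) * ((2 * j + 1)‼ : ℝ) := by
  induction j with
  | zero =>
    simp [Nat.doubleFactorial]
  | succ j ih =>
    have e1 : 2 * (j + 1) + 2 = (2 * j + 2) + 2 := by ring
    have e2 : 2 * (j + 1) + 1 = (2 * j + 1) + 2 := by ring
    rw [e1, e2, show ((2 * j + 1) + 2)‼ = ((2 * j + 1) + 2) * (2 * j + 1)‼ from
      Nat.doubleFactorial_add_two _,
      show ((2 * j + 2) + 2)‼ = ((2 * j + 2) + 2) * (2 * j + 2)‼ from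
      Nat.doubleFactorial_add_two _]
    push_cast
    have key : Real.sqrt (2 * (j : ℝ) + 2) * (2 * (j : ℝ) + 2 + 2) ≤
        Real.sqrt (2 * ((j : ℝ) + 1) + 2) * (2 * (j : ℝ) + 1 + 2) := by
      apply hsqrt <;> try positivity
      nlinarith [sq_nonneg ((j : ℝ))]
    calc (2 * (j : ℝ) + 2 + 2) * ((2 * j + 2)‼ : ℝ)
        ≤ (2 * (j : ℝ) + 2 + 2) * (Real.sqrt 2 * Real.sqrt (2 * (j : ℝ) + 2) * ((2 * j + 1)‼ : ℝ)) := by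
          apply mul_le_mul_of_nonneg_left ih (by positivity)
      _ = Real.sqrt 2 * ((Real.sqrt (2 * (j : ℝ) + 2) * (2 * (j : ℝ) + 2 + 2)) * ((2 * j + 1)‼ : ℝ)) := by ring
      _ ≤ Real.sqrt 2 * ((Real.sqrt (2 * ((j : ℝ) + 1) + 2) * (2 * (j : ℝ) + 1 + 2)) * ((2 * j + 1)‼ : ℝ)) := by
          apply mul_le_mul_of_nonneg_left _ (Real.sqrt_nonneg 2)
          apply mul_le_mul_of_nonneg_right key (df_nonneg _)
      _ = Real.sqrt 2 * Real.sqrt (2 * ((j : ℝ) + 1) + 2) * ((2 * (j : ℝ) + 1 + 2) * ((2 * j + 1)‼ : ℝ)) := by ring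

private lemma even_lower (j : ℕ) :
    Real.sqrt (2 * (j : ℝ) + 3) * ((2 * j + 1)‼ : ℝ) ≤ ((2 * j + 2)‼ : ℝ) := by
  induction j with
  | zero =>
    have h3 : Real.sqrt 3 ≤ Real.sqrt 4 := Real.sqrt_le_sqrt (by norm_num)
    have h4 : Real.sqrt 4 = 2 := by
      rw [show (4 : ℝ) = 2 ^ 2 by norm_num, Real.sqrt_sq (by norm_num)]
    simp [Nat.doubleFactorial]
    linarith
  | succ j ih =>
    have e1 : 2 * (j + 1) + 2 = (2 * j + 2) + 2 := by ring
    have e2 : 2 * (j + 1) + 1 = (2 * j + 1) + 2 := by ring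
    rw [e1, e2, show ((2 * j + 1) + 2)‼ = ((2 * j + 1) + 2) * (2 * j + 1)‼ from
      Nat.doubleFactorial_add_two _,
      show ((2 * j + 2) + 2)‼ = ((2 * j + 2) + 2) * (2 * j + 2)‼ from
      Nat.doubleFactorial_add_two _]
    push_cast
    have key : Real.sqrt (2 * ((j : ℝ) + 1) + 3) * (2 * (j : ℝ) + 1 + 2) ≤
        Real.sqrt (2 * (j : ℝ) + 3) * (2 * (j : ℝ) + 2 + 2) := by
      apply hsqrt <;> try positivity
      nlinarith [sq_nonneg ((j : ℝ))]
    calc Real.sqrt (2 * ((j : ℝ) + 1) + 3) * ((2 * (j : ℝ) + 1 + 2) * ((2 * j + 1)‼ : ℝ))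
        = (Real.sqrt (2 * ((j : ℝ) + 1) + 3) * (2 * (j : ℝ) + 1 + 2)) * ((2 * j + 1)‼ : ℝ) := by ring
      _ ≤ (Real.sqrt (2 * (j : ℝ) + 3) * (2 * (j : ℝ) + 2 + 2)) * ((2 * j + 1)‼ : ℝ) := by
          apply mul_le_mul_of_nonneg_right key (df_nonneg _)
      _ = (2 * (j : ℝ) + 2 + 2) * (Real.sqrt (2 * (j : ℝ) + 3) * ((2 * j + 1)‼ : ℝ)) := by ring
      _ ≤ (2 * (j : ℝ) + 2 + 2) * ((2 * j + 2)‼ : ℝ) := by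
          apply mul_le_mul_of_nonneg_left ih (by positivity)

private lemma step_lemma (n : ℕ) :
    (3 / 5 : ℝ) * Real.sqrt ((n : ℝ) + 1) * (n‼ : ℝ) ≤ ((n + 1)‼ : ℝ) ∧
    ((n + 1)‼ : ℝ) ≤ 2 * Real.sqrt ((n : ℝ) + 1) * (n‼ : ℝ) := by
  rcases Nat.even_or_odd n with ⟨j, hj⟩ | ⟨j, hj⟩
  · -- n = 2j, n+1 = 2j+1 odd
    subst hj
    rw [show j + j = 2 * j by ring]
    push_cast
    constructor
    · have h1 := odd_lower j
      have h2 : (3 / 5 : ℝ) * Real.sqrt (2 * (j : ℝ) + 1) ≤ Real.sqrt ((j : ℝ) + 1) := by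
        have := hsqrt (2 * (j : ℝ) + 1) ((j : ℝ) + 1) (3/5) 1 (by positivity) (by positivity)
          (by norm_num) (by norm_num) (by nlinarith)
        simpa [mul_comm] using this
      calc (3 / 5 : ℝ) * Real.sqrt (2 * (j : ℝ) + 1) * ((2 * j)‼ : ℝ)
          ≤ Real.sqrt ((j : ℝ) + 1) * ((2 * j)‼ : ℝ) :=
            mul_le_mul_of_nonneg_right h2 (df_nonneg _)
        _ ≤ ((2 * j + 1)‼ : ℝ) := h1
    · have h1 := odd_upper j
      have : Real.sqrt (2 * (j : ℝ) + 1) * ((2 * j)‼ : ℝ) ≤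
          2 * Real.sqrt (2 * (j : ℝ) + 1) * ((2 * j)‼ : ℝ) := by
        nlinarith [Real.sqrt_nonneg (2 * (j : ℝ) + 1), df_nonneg (2 * j)]
      linarith
  · -- n = 2j+1, n+1 = 2j+2 even
    subst hj
    rw [show 2 * j + 1 + 1 = 2 * j + 2 by ring]
    push_cast
    constructor
    · have h1 := even_lower j
      have h2 : (3 / 5 : ℝ) * Real.sqrt (2 * (j : ℝ) + 1 + 1) ≤ Real.sqrt (2 * (j : ℝ) + 3) := by
        have := hsqrt (2 * (j : ℝ) + 1 + 1) (2 * (j : ℝ) + 3) (3/5) 1 (by positivity)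
          (by positivity) (by norm_num) (by norm_num) (by nlinarith)
        simpa [mul_comm] using this
      calc (3 / 5 : ℝ) * Real.sqrt (2 * (j : ℝ) + 1 + 1) * ((2 * j + 1)‼ : ℝ)
          ≤ Real.sqrt (2 * (j : ℝ) + 3) * ((2 * j + 1)‼ : ℝ) :=
            mul_le_mul_of_nonneg_right h2 (df_nonneg _)
        _ ≤ ((2 * j + 2)‼ : ℝ) := h1
    · have h1 := even_upper j
      have hs2 : Real.sqrt 2 ≤ 2 := by
        have : Real.sqrt 2 ≤ Real.sqrt 4 := Real.sqrt_le_sqrt (by norm_num)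
        have h4 : Real.sqrt 4 = 2 := by
          rw [show (4 : ℝ) = 2 ^ 2 by norm_num, Real.sqrt_sq (by norm_num)]
        linarith
      have h3 : Real.sqrt 2 * Real.sqrt (2 * (j : ℝ) + 2) * ((2 * j + 1)‼ : ℝ) ≤
          2 * Real.sqrt (2 * (j : ℝ) + 1 + 1) * ((2 * j + 1)‼ : ℝ) := by
        rw [show 2 * (j : ℝ) + 1 + 1 = 2 * (j : ℝ) + 2 by ring]
        apply mul_le_mul_of_nonneg_right _ (df_nonneg _)
        apply mul_le_mul_of_nonneg_right hs2 (Real.sqrt_nonneg _)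
      linarith

theorem stmt_12 (m k : ℕ) (hk : k ≤ m) :
    (3 / 5 : ℝ) ^ k * Real.sqrt ((Nat.factorial m : ℝ) / Nat.factorial (m - k)) ≤
        (Nat.doubleFactorial m : ℝ) / Nat.doubleFactorial (m - k) ∧
      (Nat.doubleFactorial m : ℝ) / Nat.doubleFactorial (m - k) ≤
        (2 : ℝ) ^ k * Real.sqrt ((Nat.factorial m : ℝ) / Nat.factorial (m - k)) := by
  induction k with
  | zero =>
    simp only [Nat.sub_zero, pow_zero, one_mul]
    rw [div_self (by positivity : ((m ! : ℝ)) ≠ 0), Real.sqrt_one,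
      div_self (ne_of_gt (df_pos m))]
    exact ⟨le_refl 1, le_refl 1⟩
  | succ k ih =>
    have hk' : k ≤ m := Nat.le_of_succ_le hk
    obtain ⟨ih1, ih2⟩ := ih hk'
    set n := m - (k + 1) with hn
    have hmk : m - k = n + 1 := by omega
    have hnfac : ((n ! : ℝ)) ≠ 0 := by positivity
    have hfac : ((m ! : ℝ)) / (n ! : ℝ) = ((m ! : ℝ) / ((m - k)! : ℝ)) * ((n : ℝ) + 1) := by
      rw [hmk, Nat.factorial_succ]
      push_cast
      field_simp
    have hdf : ((m‼ : ℝ)) / (n‼ : ℝ) =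
        ((m‼ : ℝ) / ((m - k)‼ : ℝ)) * (((n + 1)‼ : ℝ) / (n‼ : ℝ)) := by
      rw [hmk]
      field_simp
    have hsq : Real.sqrt ((m ! : ℝ) / (n ! : ℝ)) =
        Real.sqrt ((m ! : ℝ) / ((m - k)! : ℝ)) * Real.sqrt ((n : ℝ) + 1) := by
      rw [hfac, Real.sqrt_mul (by positivity)]
    obtain ⟨st1, st2⟩ := step_lemma n
    have hdfpos : (0 : ℝ) < (n‼ : ℝ) := df_pos n
    have st1' : (3 / 5 : ℝ) * Real.sqrt ((n : ℝ) + 1) ≤ ((n + 1)‼ : ℝ) / (n‼ : ℝ) := by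
      rw [le_div_iff₀ hdfpos]; exact st1
    have st2' : ((n + 1)‼ : ℝ) / (n‼ : ℝ) ≤ 2 * Real.sqrt ((n : ℝ) + 1) := by
      rw [div_le_iff₀ hdfpos]; exact st2
    constructor
    · calc (3 / 5 : ℝ) ^ (k + 1) * Real.sqrt ((m ! : ℝ) / (n ! : ℝ))
          = ((3 / 5 : ℝ) ^ k * Real.sqrt ((m ! : ℝ) / ((m - k)! : ℝ))) *
            ((3 / 5 : ℝ) * Real.sqrt ((n : ℝ) + 1)) := by rw [hsq]; ring
        _ ≤ ((m‼ : ℝ) / ((m - k)‼ : ℝ)) * (((n + 1)‼ : ℝ) / (n‼ : ℝ)) := by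
            apply mul_le_mul ih1 st1' (by positivity)
            positivity
        _ = (m‼ : ℝ) / (n‼ : ℝ) := hdf.symm
    · calc (m‼ : ℝ) / (n‼ : ℝ)
          = ((m‼ : ℝ) / ((m - k)‼ : ℝ)) * (((n + 1)‼ : ℝ) / (n‼ : ℝ)) := hdf
        _ ≤ ((2 : ℝ) ^ k * Real.sqrt ((m ! : ℝ) / ((m - k)! : ℝ))) *
            (2 * Real.sqrt ((n : ℝ) + 1)) := by
            apply mul_le_mul ih2 st2' (by positivity)
            positivity
        _ = (2 : ℝ) ^ (k + 1) * Real.sqrt ((m ! : ℝ) / (n ! : ℝ)) := by rw [hsq]; ring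
end

section
/- For every nonnegative integer n and every real t with t ≥ n + sqrt(n), the function g_n(t) = t^n e^{-t}/n! satisfies g_n(t) ≤ exp(sqrt(n) - t/(1 + sqrt(n))) / sqrt(n+1). -/
/-!
Split `e^{-t} = e^{-ct} e^{-(1-c)t}` with `c = n / (n + √n)`, so that `1 - c = 1 / (1 + √n)`.
The factor `t^n e^{-ct}` is maximal at `t = n / c = n + √n`, where it equals
`(n + √n)^n e^{-n} ≤ n^n e^{-n} e^{√n}` because `(1 + 1/√n)^n ≤ e^{√n}`; Stirling's lower bound
`n! ≥ √(2πn) (n/e)^n ≥ √(n+1) (n/e)^n` absorbs `n^n e^{-n}`.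
-/

open Real
open scoped Nat

lemma pow_le_pow_mul_exp {m t : ℝ} (hm : 0 < m) (ht : 0 ≤ t) (n : ℕ) :
    t ^ n ≤ m ^ n * exp (n * (t / m - 1)) := by
  have hbase : t / m ≤ exp (t / m - 1) := by linarith [add_one_le_exp (t / m - 1)]
  calc t ^ n = m ^ n * (t / m) ^ n := by rw [← mul_pow, mul_div_cancel₀ t hm.ne']
    _ ≤ m ^ n * exp (t / m - 1) ^ n := by gcongr
    _ = m ^ n * exp (n * (t / m - 1)) := by rw [← exp_nat_mul]

lemma add_sqrt_pow_le (n : ℕ) : ((n : ℝ) + √n) ^ n ≤ (n : ℝ) ^ n * exp √n := by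
  rcases Nat.eq_zero_or_pos n with rfl | hn
  · simp
  have hn' : (0 : ℝ) < n := by exact_mod_cast hn
  have hexp : (n : ℝ) * ((n + √n) / n - 1) = √n := by field_simp; ring
  simpa [hexp] using pow_le_pow_mul_exp hn' (by positivity : (0 : ℝ) ≤ n + √n) n

lemma sqrt_add_one_mul_div_exp_pow_le_factorial (n : ℕ) :
    √(n + 1) * ((n : ℝ) ^ n / exp n) ≤ n ! := by
  rcases Nat.eq_zero_or_pos n with rfl | hn
  · simp
  have hsqrt : √((n : ℝ) + 1) ≤ √(2 * π * n) := by
    have h1 : (1 : ℝ) ≤ n := by exact_mod_cast hn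
    gcongr
    nlinarith [pi_gt_three]
  rw [show exp (n : ℝ) = exp 1 ^ n by rw [← exp_nat_mul, mul_one], ← div_pow]
  calc √(n + 1) * ((n : ℝ) / exp 1) ^ n ≤ √(2 * π * n) * ((n : ℝ) / exp 1) ^ n := by gcongr
    _ ≤ n ! := Stirling.le_factorial_stirling n

lemma sq_mul_div_sq_add_sub_self {s : ℝ} (hs : 0 < s) (t : ℝ) :
    s ^ 2 * (t / (s ^ 2 + s)) - t = -(t / (1 + s)) := by
  field_simp
  ring

theorem stmt_14 (n : ℕ) (t : ℝ) (ht : (n : ℝ) + Real.sqrt n ≤ t) :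
    t ^ n * Real.exp (-t) / (Nat.factorial n : ℝ) ≤
      Real.exp (Real.sqrt n - t / (1 + Real.sqrt n)) / Real.sqrt (n + 1) := by
  rcases Nat.eq_zero_or_pos n with rfl | hn
  · simp
  set s := √(n : ℝ)
  have hn' : (0 : ℝ) < n := by exact_mod_cast hn
  have hm : (0 : ℝ) < n + s := by positivity
  have hpow : t ^ n ≤ (n : ℝ) ^ n * exp s * exp (n * (t / (n + s) - 1)) :=
    (pow_le_pow_mul_exp hm (hm.le.trans ht) n).trans (by gcongr; exact add_sqrt_pow_le n)
  have hfact := sqrt_add_one_mul_div_exp_pow_le_factorial n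
  have hexp : exp s * exp (n * (t / (n + s) - 1)) * exp (-t)
      = exp (-n) * exp (s - t / (1 + s)) := by
    have hid := sq_mul_div_sq_add_sub_self (sqrt_pos.mpr hn') t
    rw [sq_sqrt hn'.le] at hid
    rw [← exp_add, ← exp_add, ← exp_add]
    congr 1
    linear_combination hid
  rw [div_le_div_iff₀ (by positivity) (by positivity)]
  calc t ^ n * exp (-t) * √(n + 1)
      ≤ (n : ℝ) ^ n * exp s * exp (n * (t / (n + s) - 1)) * exp (-t) * √(n + 1) := by gcongr
    _ = √(n + 1) * ((n : ℝ) ^ n / exp n) * exp (s - t / (1 + s)) := by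
      rw [mul_assoc ((n : ℝ) ^ n), mul_assoc ((n : ℝ) ^ n), hexp, exp_neg]
      ring
    _ ≤ exp (s - t / (1 + s)) * n ! := by rw [mul_comm _ (n ! : ℝ)]; gcongr
end

section
/- For every nonnegative integer n, every real δ with sqrt(n) ≤ δ ≤ n, the function g_n(t) = t^n e^{-t}/n! satisfies g_n(n - δ) ≤ exp(-δ²/(2n)) / sqrt(n+1). -/
/-!
Write `t = n - δ = n (1 - x)` with `x = δ / n`. The power series of `-log (1 - x)` has nonnegative
terms, so `1 - x ≤ exp (-x - x² / 2)` and hence `t ^ n e^{-t} ≤ e^{-δ² / (2n)} n ^ n e^{-n}`.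
Stirling's lower bound `√(2πn) (n / e) ^ n ≤ n!` with `n + 1 ≤ 2πn` supplies the factor
`1 / √(n + 1)`.
-/

open Real Nat

lemma add_sq_div_two_le_neg_log_one_sub {x : ℝ} (h0 : 0 ≤ x) (h1 : x < 1) :
    x + x ^ 2 / 2 ≤ -log (1 - x) := by
  have hsum := sum_le_hasSum (Finset.range 2) (fun i _ => by positivity)
    (hasSum_pow_div_log_of_abs_lt_one (by rwa [abs_of_nonneg h0]))
  norm_num [Finset.sum_range_succ] at hsum
  linarith

lemma one_sub_le_exp_neg_sub_sq_div_two {x : ℝ} (h0 : 0 ≤ x) :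
    1 - x ≤ exp (-x - x ^ 2 / 2) := by
  rcases lt_or_ge x 1 with h1 | h1
  · calc 1 - x = exp (log (1 - x)) := (exp_log (by linarith)).symm
      _ ≤ exp (-x - x ^ 2 / 2) :=
        exp_le_exp.2 (by linarith [add_sq_div_two_le_neg_log_one_sub h0 h1])
  · linarith [exp_pos (-x - x ^ 2 / 2)]

lemma one_sub_div_pow_le_exp {n : ℕ} {δ : ℝ} (hn : 0 < n) (hδ0 : 0 ≤ δ) (hδn : δ ≤ n) :
    (1 - δ / n) ^ n ≤ exp (-δ - δ ^ 2 / (2 * n)) := by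
  have hnR : (0 : ℝ) < n := by exact_mod_cast hn
  calc (1 - δ / n) ^ n ≤ exp (-(δ / n) - (δ / n) ^ 2 / 2) ^ n :=
        pow_le_pow_left₀ (sub_nonneg.2 ((div_le_one hnR).2 hδn))
          (one_sub_le_exp_neg_sub_sq_div_two (by positivity)) n
    _ = exp (-δ - δ ^ 2 / (2 * n)) := by
        rw [← exp_nat_mul]
        congr 1
        field_simp

lemma sub_pow_mul_exp_neg_le {n : ℕ} {δ : ℝ} (hn : 0 < n) (hδ0 : 0 ≤ δ) (hδn : δ ≤ n) :
    ((n : ℝ) - δ) ^ n * exp (-((n : ℝ) - δ)) ≤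
      exp (-δ ^ 2 / (2 * n)) * ((n : ℝ) ^ n * exp (-(n : ℝ))) := by
  have hnR : (n : ℝ) ≠ 0 := by positivity
  have hfactor : (n : ℝ) - δ = n * (1 - δ / n) := by field_simp
  calc ((n : ℝ) - δ) ^ n * exp (-((n : ℝ) - δ))
      = (n : ℝ) ^ n * (1 - δ / n) ^ n * exp (δ - n) := by
        rw [hfactor, mul_pow, ← hfactor, neg_sub]
    _ ≤ (n : ℝ) ^ n * exp (-δ - δ ^ 2 / (2 * n)) * exp (δ - n) := by
        gcongr
        exact one_sub_div_pow_le_exp hn hδ0 hδn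
    _ = exp (-δ ^ 2 / (2 * n)) * ((n : ℝ) ^ n * exp (-(n : ℝ))) := by
        rw [mul_assoc, ← exp_add, mul_left_comm, ← exp_add]
        ring_nf

lemma sqrt_add_one_mul_pow_mul_exp_neg_le_factorial {n : ℕ} (hn : 0 < n) :
    √(n + 1) * ((n : ℝ) ^ n * exp (-(n : ℝ))) ≤ n ! := by
  have hnR : (1 : ℝ) ≤ n := by exact_mod_cast hn
  have hsqrt : √(n + 1) ≤ √(2 * π * n) := sqrt_le_sqrt (by nlinarith [pi_gt_three])
  have hpow : ((n : ℝ) / exp 1) ^ n = (n : ℝ) ^ n * exp (-(n : ℝ)) := by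
    rw [div_pow, exp_neg, ← exp_nat_mul, mul_one, div_eq_mul_inv]
  calc √(n + 1) * ((n : ℝ) ^ n * exp (-(n : ℝ)))
      ≤ √(2 * π * n) * ((n : ℝ) / exp 1) ^ n := by
        rw [hpow]
        gcongr
    _ ≤ n ! := Stirling.le_factorial_stirling n

theorem stmt_15 (n : ℕ) (δ : ℝ) (h1 : Real.sqrt n ≤ δ) (h2 : δ ≤ n) :
    ((n : ℝ) - δ) ^ n * Real.exp (-((n : ℝ) - δ)) / (Nat.factorial n : ℝ) ≤
      Real.exp (-δ ^ 2 / (2 * n)) / Real.sqrt (n + 1) := by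
  have hδ0 : 0 ≤ δ := (sqrt_nonneg _).trans h1
  rcases Nat.eq_zero_or_pos n with rfl | hn
  · obtain rfl : δ = 0 := le_antisymm (by exact_mod_cast h2) hδ0
    norm_num
  set N : ℝ := (n : ℝ) ^ n * exp (-(n : ℝ))
  have hnum : 0 ≤ ((n : ℝ) - δ) ^ n * exp (-((n : ℝ) - δ)) :=
    mul_nonneg (pow_nonneg (sub_nonneg.2 h2) n) (exp_pos _).le
  have hN : 0 < N := by positivity
  have hden : 0 < √(n + 1) * N := by positivity
  calc _ ≤ ((n : ℝ) - δ) ^ n * exp (-((n : ℝ) - δ)) / (√(n + 1) * N) :=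
        div_le_div_of_nonneg_left hnum hden (sqrt_add_one_mul_pow_mul_exp_neg_le_factorial hn)
    _ ≤ exp (-δ ^ 2 / (2 * n)) * N / (√(n + 1) * N) :=
        div_le_div_of_nonneg_right (sub_pow_mul_exp_neg_le hn hδ0 h2) hden.le
    _ = exp (-δ ^ 2 / (2 * n)) / √(n + 1) := by
        field_simp
end
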